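/- Let G be a finite simple graph with no isolated vertices, H a finite simple graph, and α a locally constant H-labeling of G such that val(h) = m ≥ 1 for every h in the image of α. Define recursively Δ₁ = G, α₁ = α, Δ_{n+1} = Δ_n ⋈_{α_n} H with π_{n+1} : Δ_{n+1} → Δ_n the first-coordinate projection and α_{n+1}(x,{x,y}) = α_n(π_{n+1}(x),{π_{n+1}(x),π_{n+1}(y)}). Assume each Δ_n is nonempty with no isolated vertices. Then for all k ≥ n ≥ 1, every eigenvalue of the normalized Laplacian of Δ_n is an eigenvalue of the normalized Laplacian of Δ_k. -/

import Mathlib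

open Finset Filter

open scoped Classical

universe u v

variable {V : Type u} {W : Type v}

/-- The generalized zig-zag product of an `H`-labeled graph `(G, α)` with `H`.
The labeling `α : D(G) → V(H)` is encoded as `α : V → V → W`, where for adjacent
vertices `u, v` the value `α u v` represents `α(u, {u,v})`. -/
def zigzag (G : SimpleGraph V) (H : SimpleGraph W) (α : V → V → W) :
    SimpleGraph (V × W) where
  Adj p q := G.Adj p.1 q.1 ∧ H.Adj (α p.1 q.1) p.2 ∧ H.Adj (α q.1 p.1) q.2
  symm := by
    first
    | exact ⟨fun _ _ h => ⟨h.1.symm, h.2.2, h.2.1⟩⟩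
    | exact fun _ _ h => ⟨h.1.symm, h.2.2, h.2.1⟩
  loopless := by
    first
    | exact ⟨fun p h => G.irrefl h.1⟩
    | exact fun p h => G.irrefl h.1

/-- The vertex set of the zig-zag product `G ⋈_α H`:
pairs `(u, i)` such that some edge `e` of `G` is incident to `u` with `i`
adjacent to `α(u, e)` in `H`. -/
def zigzagVerts (G : SimpleGraph V) (H : SimpleGraph W) (α : V → V → W) :
    Set (V × W) :=
  {p | ∃ w, G.Adj p.1 w ∧ H.Adj (α p.1 w) p.2}

/-- The normalized Laplacian of a finite graph: `L(u,u) = 1`,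
`L(u,v) = -1/√(val u · val v)` if `u ∼ v`, and `0` otherwise. -/
noncomputable def normLap {X : Type*} [Fintype X] (G : SimpleGraph X) : Matrix X X ℝ :=
  fun x y =>
    if x = y then 1
    else if G.Adj x y then
      -(1 / Real.sqrt (((G.neighborSet x).ncard : ℝ) * ((G.neighborSet y).ncard : ℝ)))
    else 0

/-- A finite `H`-labeled graph: a finite vertex type, a simple graph on it and an
`H`-labeling. -/
structure FinLabGraph (W : Type u) : Type (u + 1) where
  V : Type u
  fin : Fintype V
  G : SimpleGraph V
  lab : V → V → W

/-- One step of the finite zig-zag tower: pass from `(Δ, α)` to `Δ ⋈_α H` (on its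
vertex set) with the labeling pulled back along the first-coordinate projection. -/
noncomputable def stepFLG {W : Type u} [Fintype W] (H : SimpleGraph W)
    (X : FinLabGraph W) : FinLabGraph W where
  V := ↥(zigzagVerts X.G H X.lab)
  fin := by haveI := X.fin; infer_instance
  G := (zigzag X.G H X.lab).induce (zigzagVerts X.G H X.lab)
  lab := fun x y => X.lab x.val.1 y.val.1

/-- The finite zig-zag tower `Δ₁ = (G, α)`, `Δ_{n+1} = Δ_n ⋈_{α_n} H`
(indexed from `0`). -/
noncomputable def towerFLG {W : Type u} [Fintype W] (H : SimpleGraph W)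
    (X : FinLabGraph W) : ℕ → FinLabGraph W
  | 0 => X
  | n + 1 => stepFLG H (towerFLG H X n)

/-- The normalized Laplacian of a finite labeled graph. -/
noncomputable def normLapFLG {W : Type u} (X : FinLabGraph W) : Matrix X.V X.V ℝ :=
  @normLap X.V X.fin X.G

/-- `μ` is an eigenvalue of the normalized Laplacian of the finite labeled graph `X`. -/
noncomputable def HasNormLapEigenvalue {W : Type u} (X : FinLabGraph W) (μ : ℝ) : Prop :=
  letI := X.fin
  ∃ x : X.V → ℝ, x ≠ 0 ∧ (normLapFLG X).mulVec x = μ • x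

/-!
For a locally constant labeling, two vertices `(v, i)` and `(w, j)` of `Δ ⋈_α H` are adjacent
exactly when `v ∼ w` in `Δ`, and the fibre of the projection over `v` is a copy of the
`H`-neighbourhood of the label at `v`, of size `m`. So `Δ ⋈_α H` is a uniform `m`-fold blow-up
of `Δ`: all degrees are multiplied by `m`, and in the normalized Laplacian applied to a pulled
back vector each neighbour of `Δ` contributes `m` equal terms scaled by `1 / m`. Pulling back
along the projection therefore maps eigenvectors to eigenvectors with the same eigenvalue, and
since the pulled back labeling is again locally constant of valency `m`, this climbs the tower.
-/

theorem Finset.sum_comp_of_card_fiber {α β M : Type*} [Fintype α] [Fintype β]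
    [AddCommMonoid M] (f : α → β) {m : ℕ} (hfib : ∀ b, #{a | f a = b} = m) (g : β → M) :
    ∑ a, g (f a) = m • ∑ b, g b := by
  rw [← Finset.sum_fiberwise univ f, Finset.smul_sum]
  refine Finset.sum_congr rfl fun b _ => ?_
  rw [Finset.sum_congr rfl fun a ha => congrArg g (Finset.mem_filter.mp ha).2,
    Finset.sum_const, hfib]

namespace SimpleGraph

section NormLap

variable {X : Type*} [Fintype X] (G : SimpleGraph X)

theorem ncard_neighborSet_eq_card_filter (u : X) :
    (G.neighborSet u).ncard = #{v | G.Adj u v} := by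
  rw [Set.ncard_eq_toFinset_card']
  congr 1
  ext v
  simp

theorem normLap_mulVec_apply (x : X → ℝ) (u : X) :
    (normLap G).mulVec x u = x u - ∑ v, if G.Adj u v then
      x v / √((G.neighborSet u).ncard * (G.neighborSet v).ncard) else 0 := by
  have hentry : ∀ v, normLap G u v * x v = (if u = v then x v else 0) - if G.Adj u v then
      x v / √((G.neighborSet u).ncard * (G.neighborSet v).ncard) else 0 := by
    intro v
    by_cases huv : u = v
    · subst huv
      simp [normLap]
    · by_cases hadj : G.Adj u v <;> simp [normLap, huv, hadj, div_eq_inv_mul]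
  simp only [Matrix.mulVec, dotProduct, hentry, Finset.sum_sub_distrib, Finset.sum_ite_eq,
    Finset.mem_univ, if_true]

end NormLap

section Blowup

variable {X Y : Type*} [Fintype X] [Fintype Y] {G : SimpleGraph X} {G' : SimpleGraph Y}

theorem ncard_neighborSet_of_card_fiber (f : Y → X) {m : ℕ}
    (hadj : ∀ p q, G'.Adj p q ↔ G.Adj (f p) (f q)) (hfib : ∀ v, #{p | f p = v} = m) (p : Y) :
    (G'.neighborSet p).ncard = m * (G.neighborSet (f p)).ncard := by
  simp only [ncard_neighborSet_eq_card_filter, Finset.card_filter, hadj]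
  exact Finset.sum_comp_of_card_fiber f hfib fun v => if G.Adj (f p) v then 1 else 0

theorem normLap_mulVec_comp_of_card_fiber (f : Y → X) {m : ℕ} (hm : m ≠ 0)
    (hadj : ∀ p q, G'.Adj p q ↔ G.Adj (f p) (f q)) (hfib : ∀ v, #{p | f p = v} = m)
    (x : X → ℝ) : (normLap G').mulVec (x ∘ f) = (normLap G).mulVec x ∘ f := by
  ext p
  set g : X → ℝ := fun v => if G.Adj (f p) v then
    x v / √((G.neighborSet (f p)).ncard * (G.neighborSet v).ncard) else 0
  have hterm : ∀ q, (if G'.Adj p q then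
      (x ∘ f) q / √((G'.neighborSet p).ncard * (G'.neighborSet q).ncard) else 0) =
        g (f q) / m := by
    intro q
    simp only [g, hadj, ncard_neighborSet_of_card_fiber f hadj hfib, Function.comp_apply]
    split_ifs
    · rw [Nat.cast_mul, Nat.cast_mul, mul_mul_mul_comm, ← sq, Real.sqrt_mul (sq_nonneg _),
        Real.sqrt_sq (Nat.cast_nonneg m), div_mul_eq_div_div_swap]
    · rw [zero_div]
  rw [Function.comp_apply, normLap_mulVec_apply, normLap_mulVec_apply,
    Finset.sum_congr rfl fun q _ => hterm q,
    Finset.sum_comp_of_card_fiber f hfib fun v => g v / m, ← Finset.sum_div, nsmul_eq_mul,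
    mul_div_cancel₀ _ (Nat.cast_ne_zero.mpr hm)]
  rfl

theorem normLap_hasEigenvector_comp_of_card_fiber (f : Y → X) {m : ℕ} (hm : m ≠ 0)
    (hadj : ∀ p q, G'.Adj p q ↔ G.Adj (f p) (f q)) (hfib : ∀ v, #{p | f p = v} = m)
    {μ : ℝ} {x : X → ℝ} (hx0 : x ≠ 0) (hx : (normLap G).mulVec x = μ • x) :
    x ∘ f ≠ 0 ∧ (normLap G').mulVec (x ∘ f) = μ • (x ∘ f) := by
  have hsurj : f.Surjective := fun v => by
    obtain ⟨p, hp⟩ := Finset.card_pos.mp ((hfib v).symm ▸ Nat.pos_of_ne_zero hm)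
    exact ⟨p, (Finset.mem_filter.mp hp).2⟩
  refine ⟨fun h => hx0 (hsurj.injective_comp_right (h.trans (Pi.zero_comp f).symm)), ?_⟩
  rw [normLap_mulVec_comp_of_card_fiber f hm hadj hfib, hx]
  rfl

end Blowup

end SimpleGraph

section Zigzag

variable {G : SimpleGraph V} {H : SimpleGraph W} {α : V → V → W}

theorem mem_zigzagVerts_iff (hlc : ∀ x y z, G.Adj x y → G.Adj x z → α x y = α x z)
    {v w : V} (hvw : G.Adj v w) (j : W) : (v, j) ∈ zigzagVerts G H α ↔ H.Adj (α v w) j :=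
  ⟨fun ⟨_, hvu, hj⟩ => hlc v _ w hvu hvw ▸ hj, fun hj => ⟨w, hvw, hj⟩⟩

theorem zigzag_induce_adj_iff (hlc : ∀ x y z, G.Adj x y → G.Adj x z → α x y = α x z)
    (p q : zigzagVerts G H α) :
    ((zigzag G H α).induce (zigzagVerts G H α)).Adj p q ↔ G.Adj p.1.1 q.1.1 := by
  refine ⟨fun h => h.1, fun h => ⟨h, ?_, ?_⟩⟩
  · obtain ⟨w, hw, hi⟩ := p.2
    exact hlc _ w _ hw h ▸ hi
  · obtain ⟨w, hw, hj⟩ := q.2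
    exact hlc _ w _ hw h.symm ▸ hj

theorem card_fiber_zigzagVerts [Fintype W] [Fintype (zigzagVerts G H α)]
    (hlc : ∀ x y z, G.Adj x y → G.Adj x z → α x y = α x z) {v w : V} (hvw : G.Adj v w) :
    #{p : zigzagVerts G H α | p.1.1 = v} = (H.neighborSet (α v w)).ncard := by
  rw [Set.ncard_eq_toFinset_card']
  refine Finset.card_bij' (fun p _ => p.1.2)
    (fun j hj => ⟨(v, j), (mem_zigzagVerts_iff hlc hvw j).mpr (by simpa using hj)⟩) ?_ ?_ ?_ ?_
  · rintro ⟨⟨v', j⟩, hp⟩ hv'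
    obtain rfl : v' = v := (Finset.mem_filter.mp hv').2
    simpa using (mem_zigzagVerts_iff hlc hvw j).mp hp
  · intro j _
    simp
  · rintro ⟨⟨v', j⟩, hp⟩ hv'
    obtain rfl : v' = v := (Finset.mem_filter.mp hv').2
    rfl
  · intro j _
    rfl

end Zigzag

namespace FinLabGraph

def IsLocallyConstant {W : Type u} (X : FinLabGraph W) : Prop :=
  ∀ x y z, X.G.Adj x y → X.G.Adj x z → X.lab x y = X.lab x z

def LabelsHaveValency {W : Type u} (H : SimpleGraph W) (m : ℕ) (X : FinLabGraph W) : Prop :=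
  ∀ x y, X.G.Adj x y → (H.neighborSet (X.lab x y)).ncard = m

variable {W : Type u} [Fintype W] {H : SimpleGraph W} {X : FinLabGraph W}

theorem IsLocallyConstant.stepFLG (hX : X.IsLocallyConstant) :
    (stepFLG H X).IsLocallyConstant :=
  fun _ _ _ hxy hxz => hX _ _ _ hxy.1 hxz.1

theorem LabelsHaveValency.stepFLG {m : ℕ} (hX : X.LabelsHaveValency H m) :
    (stepFLG H X).LabelsHaveValency H m :=
  fun _ _ hxy => hX _ _ hxy.1

theorem IsLocallyConstant.towerFLG (hX : X.IsLocallyConstant) (n : ℕ) :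
    (towerFLG H X n).IsLocallyConstant := by
  induction n with
  | zero => exact hX
  | succ n ih => exact ih.stepFLG

theorem LabelsHaveValency.towerFLG {m : ℕ} (hX : X.LabelsHaveValency H m) (n : ℕ) :
    (towerFLG H X n).LabelsHaveValency H m := by
  induction n with
  | zero => exact hX
  | succ n ih => exact ih.stepFLG

end FinLabGraph

theorem HasNormLapEigenvalue.stepFLG {W : Type u} [Fintype W] {H : SimpleGraph W}
    {X : FinLabGraph W} {m : ℕ} (hm : m ≠ 0) (hnoiso : ∀ x, ∃ y, X.G.Adj x y)
    (hlc : X.IsLocallyConstant) (hval : X.LabelsHaveValency H m) {μ : ℝ}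
    (hμ : HasNormLapEigenvalue X μ) : HasNormLapEigenvalue (stepFLG H X) μ := by
  let _ : Fintype X.V := X.fin
  obtain ⟨x, hx0, hx⟩ := hμ
  have hfib (v : X.V) : #{p : zigzagVerts X.G H X.lab | p.1.1 = v} = m := by
    obtain ⟨w, hvw⟩ := hnoiso v
    rw [card_fiber_zigzagVerts hlc hvw, hval v w hvw]
  exact ⟨_, SimpleGraph.normLap_hasEigenvector_comp_of_card_fiber
    (fun p : zigzagVerts X.G H X.lab => p.1.1) hm (zigzag_induce_adj_iff hlc) hfib hx0 hx⟩

theorem zigzag_tower_laplacian_spectrum_general {V W : Type u} [inst : Fintype V] [Fintype W]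
    (G : SimpleGraph V) (H : SimpleGraph W) (α : V → V → W)
    (hlc : ∀ x y z : V, G.Adj x y → G.Adj x z → α x y = α x z)
    (m : ℕ) (hm : 1 ≤ m)
    (hval : ∀ x y : V, G.Adj x y → (H.neighborSet (α x y)).ncard = m)
    (hnoiso : ∀ (n : ℕ) (x : (towerFLG H ⟨V, inst, G, α⟩ n).V),
      ∃ y, (towerFLG H ⟨V, inst, G, α⟩ n).G.Adj x y) :
    ∀ n k : ℕ, n ≤ k → ∀ μ : ℝ,
      HasNormLapEigenvalue (towerFLG H ⟨V, inst, G, α⟩ n) μ →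
      HasNormLapEigenvalue (towerFLG H ⟨V, inst, G, α⟩ k) μ := by
  intro n k hnk μ hμ
  induction k, hnk using Nat.le_induction with
  | base => exact hμ
  | succ k _ ih =>
    exact HasNormLapEigenvalue.stepFLG (Nat.one_le_iff_ne_zero.mp hm) (hnoiso k)
      (FinLabGraph.IsLocallyConstant.towerFLG (X := ⟨V, inst, G, α⟩) hlc k)
      (FinLabGraph.LabelsHaveValency.towerFLG (X := ⟨V, inst, G, α⟩) hval k) ih

/-- For a finite graph `G` with no isolated vertices, a finite graph
`H`, and a locally constant `H`-labeling `α` with `val(h) = m ≥ 1` on the image of `α`,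
if every term of the zig-zag tower `Δ₁ = G`, `Δ_{n+1} = Δ_n ⋈_{α_n} H` is nonempty with
no isolated vertices, then for all `k ≥ n`, every eigenvalue of the normalized
Laplacian of `Δ_n` is an eigenvalue of the normalized Laplacian of `Δ_k`. -/
theorem zigzag_tower_laplacian_spectrum {V W : Type u} [inst : Fintype V] [Fintype W]
    (G : SimpleGraph V) (H : SimpleGraph W) (α : V → V → W)
    (hG : ∀ x : V, ∃ y, G.Adj x y)
    (hlc : ∀ x y z : V, G.Adj x y → G.Adj x z → α x y = α x z)
    (m : ℕ) (hm : 1 ≤ m)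
    (hval : ∀ x y : V, G.Adj x y → (H.neighborSet (α x y)).ncard = m)
    (hne : ∀ n : ℕ, Nonempty (towerFLG H ⟨V, inst, G, α⟩ n).V)
    (hnoiso : ∀ (n : ℕ) (x : (towerFLG H ⟨V, inst, G, α⟩ n).V),
      ∃ y, (towerFLG H ⟨V, inst, G, α⟩ n).G.Adj x y) :
    ∀ n k : ℕ, n ≤ k → ∀ μ : ℝ,
      HasNormLapEigenvalue (towerFLG H ⟨V, inst, G, α⟩ n) μ →
      HasNormLapEigenvalue (towerFLG H ⟨V, inst, G, α⟩ k) μ :=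
  zigzag_tower_laplacian_spectrum_general (inst := inst) G H α hlc m hm hval hnoiso
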